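/- Let m, n ≥ 1 and let φ : F_m → F_n be a group homomorphism that is not injective, where both free groups are equipped with the bi-invariant word metrics associated with their standard generating sets. Then φ is not a quasi-isometric embedding; indeed, its kernel is an unbounded subset of F_m whose image under φ is bounded. -/

import Mathlib

/-- The set of conjugates of elements of `S ∪ S⁻¹`. -/
def conjGens {G : Type*} [Group G] (S : Set G) : Set G :=
  {x | ∃ g s : G, (s ∈ S ∨ s⁻¹ ∈ S) ∧ x = g * s * g⁻¹}

/-- The conjugation-invariant word norm associated to a normally generating set `S`:
the least `k` such that `g` is a product of `k` conjugates of elements of `S ∪ S⁻¹`. -/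
noncomputable def ciNorm {G : Type*} [Group G] (S : Set G) (g : G) : ℕ :=
  sInf {k | ∃ f : Fin k → G, (∀ i, f i ∈ conjGens S) ∧ (List.ofFn f).prod = g}

/-- The bi-invariant word metric associated to `S`. -/
noncomputable def ciDist {G : Type*} [Group G] (S : Set G) (g h : G) : ℝ :=
  (ciNorm S (g * h⁻¹) : ℝ)

/-- The bi-invariant word metric on the free group on `Fin n`,
associated with the standard generating set. -/
noncomputable def freeDist (n : ℕ) (g h : FreeGroup (Fin n)) : ℝ :=
  ciDist (Set.range (FreeGroup.of : Fin n → FreeGroup (Fin n))) g h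

/-- A quasi-isometric embedding between spaces with distance functions `d₁`, `d₂`. -/
def IsQuasiIsometricEmbedding {X Y : Type*} (d₁ : X → X → ℝ) (d₂ : Y → Y → ℝ)
    (φ : X → Y) : Prop :=
  ∃ C > (0:ℝ), ∃ D ≥ (0:ℝ), ∀ x y : X,
    (1/C) * d₁ x y - D ≤ d₂ (φ x) (φ y) ∧ d₂ (φ x) (φ y) ≤ C * d₁ x y + D

/-- Quasi-surjectivity of a map into a space with distance function `d₂`. -/
def IsQuasiSurjective {X Y : Type*} (d₂ : Y → Y → ℝ) (φ : X → Y) : Prop :=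
  ∃ B ≥ (0:ℝ), ∀ y : Y, ∃ x : X, d₂ (φ x) y ≤ B

/-! Exponent sums are homomorphisms `F_m → ℤ` taking values in `{-1, 0, 1}` on conjugates of
generators, so they bound the bi-invariant norm from below: if `w` has a nonzero exponent sum,
then `‖w ^ k‖ ≥ k`. The kernel `K` of `φ` contains such a `w`. Otherwise `K` lies in the
commutator subgroup, so `F_m ⧸ K`, which is free by Nielsen–Schreier since it embeds in `F_n`,
has abelianization `ℤ^m` and is therefore free of rank `m`. Then `F_m → F_m ⧸ K ≃ F_m` is a
surjective endomorphism with kernel `K ≠ 1`, which is impossible because free groups of finite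
rank are Hopfian: they are finitely generated and residually finite (a reduced word of length
`L` acts nontrivially on `L + 1` points). Finally `φ (K) = {1}` is bounded. -/

open Function

section ConjugationInvariantNorm

variable {G : Type*} [Group G] {S : Set G}

lemma mem_conjGens_of_mem {s : G} (hs : s ∈ S) : s ∈ conjGens S :=
  ⟨1, s, Or.inl hs, by simp⟩

lemma inv_mem_conjGens_of_mem {s : G} (hs : s ∈ S) : s⁻¹ ∈ conjGens S :=
  ⟨1, s⁻¹, Or.inr (by simpa using hs), by simp⟩

lemma ciNorm_le_length {L : List G} (hL : ∀ x ∈ L, x ∈ conjGens S) :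
    ciNorm S L.prod ≤ L.length :=
  Nat.sInf_le ⟨L.get, fun i => hL _ (L.get_mem i), by rw [List.ofFn_get]⟩

lemma ciNorm_one (S : Set G) : ciNorm S 1 = 0 :=
  Nat.eq_zero_of_le_zero (ciNorm_le_length (L := []) (by simp))

lemma exists_list_prod_eq_of_mem_closure {g : G} (hg : g ∈ Subgroup.closure S) :
    ∃ L : List G, (∀ x ∈ L, x ∈ conjGens S) ∧ L.prod = g := by
  induction hg using Subgroup.closure_induction'' with
  | mem s hs => exact ⟨[s], by simpa using mem_conjGens_of_mem hs, by simp⟩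
  | inv_mem s hs => exact ⟨[s⁻¹], by simpa using inv_mem_conjGens_of_mem hs, by simp⟩
  | one => exact ⟨[], by simp, rfl⟩
  | mul x y _ _ hx hy =>
    obtain ⟨Lx, hLx, rfl⟩ := hx
    obtain ⟨Ly, hLy, rfl⟩ := hy
    exact ⟨Lx ++ Ly, fun z hz => (List.mem_append.mp hz).elim (hLx z) (hLy z), by simp⟩

lemma natAbs_le_length_of_forall_mem_conjGens (ψ : G →* Multiplicative ℤ)
    (hψ : ∀ s ∈ S, (ψ s).toAdd.natAbs ≤ 1) {L : List G} (hL : ∀ x ∈ L, x ∈ conjGens S) :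
    (ψ L.prod).toAdd.natAbs ≤ L.length := by
  induction L with
  | nil => simp
  | cons x L ih =>
    obtain ⟨g, s, hs, rfl⟩ := hL x List.mem_cons_self
    have hconj : ψ (g * s * g⁻¹) = ψ s := by simp only [map_mul, map_inv, mul_inv_cancel_comm]
    have hx : (ψ s).toAdd.natAbs ≤ 1 := hs.elim (hψ s) fun h => by simpa using hψ _ h
    calc (ψ (g * s * g⁻¹ :: L).prod).toAdd.natAbs
        = ((ψ s).toAdd + (ψ L.prod).toAdd).natAbs := by
          rw [List.prod_cons, map_mul, hconj]; rfl
      _ ≤ (ψ s).toAdd.natAbs + (ψ L.prod).toAdd.natAbs := Int.natAbs_add_le _ _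
      _ ≤ 1 + L.length := add_le_add hx (ih fun y hy => hL y (List.mem_cons_of_mem _ hy))
      _ = (g * s * g⁻¹ :: L).length := by simp [add_comm]

lemma natAbs_le_ciNorm (ψ : G →* Multiplicative ℤ)
    (hψ : ∀ s ∈ S, (ψ s).toAdd.natAbs ≤ 1) {g : G} (hg : g ∈ Subgroup.closure S) :
    (ψ g).toAdd.natAbs ≤ ciNorm S g := by
  obtain ⟨L, hL, rfl⟩ := exists_list_prod_eq_of_mem_closure hg
  have hne :
      {k | ∃ f : Fin k → G, (∀ i, f i ∈ conjGens S) ∧ (List.ofFn f).prod = L.prod}.Nonempty :=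
    ⟨L.length, L.get, fun i => hL _ (L.get_mem i), by rw [List.ofFn_get]⟩
  obtain ⟨f, hf, hprod⟩ := Nat.sInf_mem hne
  have := natAbs_le_length_of_forall_mem_conjGens ψ hψ (L := List.ofFn f)
    (by simpa [List.mem_ofFn] using hf)
  rwa [hprod, List.length_ofFn] at this

lemma le_ciNorm_pow (ψ : G →* Multiplicative ℤ)
    (hψ : ∀ s ∈ S, (ψ s).toAdd.natAbs ≤ 1) {g : G} (hg : g ∈ Subgroup.closure S)
    (hψg : ψ g ≠ 1) (k : ℕ) :
    k ≤ ciNorm S (g ^ k) :=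
  calc k ≤ k * (ψ g).toAdd.natAbs :=
        Nat.le_mul_of_pos_right k (Int.natAbs_pos.mpr (by simpa using hψg))
    _ = (ψ (g ^ k)).toAdd.natAbs := by simp [Int.natAbs_mul]
    _ ≤ ciNorm S (g ^ k) := natAbs_le_ciNorm ψ hψ (pow_mem hg k)

end ConjugationInvariantNorm

theorem List.prod_smul_eq_of_forall_getElem_smul {M β : Type*} [Monoid M] [MulAction M β]
    (L : List M) (p : ℕ → β) (h : ∀ t (ht : t < L.length), L[t] • p (t + 1) = p t) :
    L.prod • p L.length = p 0 := by
  induction L generalizing p with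
  | nil => simp
  | cons x L ih =>
    have hL : L.prod • p (L.length + 1) = p 1 :=
      ih (p ∘ (· + 1)) fun t ht => h (t + 1) (by simpa)
    rw [List.prod_cons, mul_smul, List.length_cons, hL]
    exact h 0 (by simp)

theorem FreeGroup.IsReduced.exists_perm_path {α : Type*} {l : List (α × Bool)}
    (hl : IsReduced l) :
    ∃ σ : α → Equiv.Perm (Fin (l.length + 1)), ∀ t (ht : t < l.length),
      (bif l[t].2 then σ l[t].1 else (σ l[t].1)⁻¹) ⟨t + 1, by omega⟩ = ⟨t, by omega⟩ := by
  classical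
  have hadj :
      ∀ t t' : Fin l.length, t.val + 1 = t' → l[t].1 = l[t'].1 → l[t].2 = l[t'].2 := by
    rintro t ⟨t', ht'⟩ rfl
    exact hl.getElem t ht'
  -- For each occurrence `t` of the letter `i`, `σ i` must send `shift i true t` to
  -- `shift i false t`; both maps are injective because `l` is reduced.
  let shift (i : α) (c : Bool) (t : {t : Fin l.length // l[t].1 = i}) : Fin (l.length + 1) :=
    ⟨t.1.val + if l[t.1].2 = c then 1 else 0, by split_ifs <;> omega⟩
  have hshift (i : α) (c : Bool) : Injective (shift i c) := by
    rintro ⟨t, hti⟩ ⟨t', hti'⟩ h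
    have h' := congrArg Fin.val h
    simp only [shift] at h'
    have hsign := hadj t t'
    have hsign' := hadj t' t
    congr 1
    ext
    split_ifs at h' <;> grind
  choose σ hσ using fun i =>
    Equiv.Perm.exists_extending_pair _ _ (hshift i true) (hshift i false)
  refine ⟨σ, fun t ht => ?_⟩
  have := hσ l[t].1 ⟨⟨t, ht⟩, rfl⟩
  simp only [shift] at this
  cases hb : l[t].2
  · simpa [hb, Equiv.Perm.inv_def, Equiv.symm_apply_eq] using this.symm
  · simpa [hb] using this

instance FreeGroup.residuallyFinite (α : Type*) : Group.ResiduallyFinite (FreeGroup α) := by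
  classical
  refine Group.residuallyFinite_of_forall_exists_finite_monoidHom fun w hw => ?_
  set l := w.toWord
  have hl : 0 < l.length :=
    List.length_pos_iff.mpr (by rwa [Ne, FreeGroup.toWord_eq_nil_iff])
  obtain ⟨σ, hσ⟩ := (FreeGroup.isReduced_toWord (x := w)).exists_perm_path
  refine ⟨Equiv.Perm (Fin (l.length + 1)), inferInstance, inferInstance, FreeGroup.lift σ,
    fun h => ?_⟩
  have hpath := List.prod_smul_eq_of_forall_getElem_smul
    (l.map fun x => bif x.2 then σ x.1 else (σ x.1)⁻¹) (Fin.ofNat (l.length + 1)) fun t ht => by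
      simp only [List.length_map] at ht
      have hval (s : ℕ) (hs : s ≤ l.length) : Fin.ofNat (l.length + 1) s = ⟨s, by omega⟩ :=
        Fin.ext (Nat.mod_eq_of_lt (by omega))
      rw [List.getElem_map, Equiv.Perm.smul_def, hval _ ht, hval _ ht.le]
      exact hσ t ht
  rw [← FreeGroup.lift_mk, FreeGroup.mk_toWord, h, one_smul, List.length_map] at hpath
  simp [Fin.ext_iff, hl.ne'] at hpath

lemma Group.finite_monoidHom_of_fg (G Q : Type*) [Group G] [Group.FG G] [Monoid Q] [Finite Q] :
    Finite (G →* Q) := by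
  obtain ⟨S, hS, hfin⟩ := Group.fg_iff.mp ‹_›
  have := hfin.to_subtype
  exact Finite.of_injective (fun f : G →* Q => fun s : S => f s)
    fun f g hfg => MonoidHom.eq_of_eqOn_dense hS fun s hs => congrFun hfg ⟨s, hs⟩

theorem Group.ResiduallyFinite.injective_of_surjective {G : Type*} [Group G] [Group.FG G]
    [Group.ResiduallyFinite G] {f : G →* G} (hf : Surjective f) : Injective f := by
  refine (injective_iff_map_eq_one f).mpr fun g hg => by_contra fun hne => ?_
  obtain ⟨H, hgH⟩ := Group.exists_finiteIndexNormalSubgroup_notMem g hne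
  have := Group.finite_monoidHom_of_fg G (G ⧸ H.toSubgroup)
  have hcomp : Injective fun ψ : G →* G ⧸ H.toSubgroup => ψ.comp f :=
    fun ψ₁ ψ₂ h => MonoidHom.ext fun x => by
      obtain ⟨y, rfl⟩ := hf x
      exact DFunLike.congr_fun h y
  obtain ⟨ψ, hψ⟩ := Finite.injective_iff_surjective.mp hcomp (QuotientGroup.mk' H.toSubgroup)
  apply hgH
  rw [← FiniteIndexNormalSubgroup.mem_toSubgroup_iff, ← QuotientGroup.eq_one_iff,
    ← QuotientGroup.mk'_apply, ← hψ, MonoidHom.comp_apply, hg, map_one]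

theorem Abelianization.map_bijective_of_surjective_of_ker_le {G H : Type*} [Group G] [Group H]
    {f : G →* H} (hf : Surjective f) (hker : f.ker ≤ commutator G) :
    Bijective (Abelianization.map f) := by
  refine ⟨(injective_iff_map_eq_one _).mpr fun x hx => ?_, fun y => ?_⟩
  · obtain ⟨a, rfl⟩ := QuotientGroup.mk_surjective x
    change Abelianization.map f (Abelianization.of a) = 1 at hx
    rw [Abelianization.map_of, ← MonoidHom.mem_ker, Abelianization.ker_of, commutator,
      ← Subgroup.map_top_of_surjective f hf, ← Subgroup.map_commutator] at hx
    obtain ⟨c, hc, hca⟩ := hx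
    have hac : a * c⁻¹ ∈ commutator G := hker (by simp [hca])
    change Abelianization.of a = 1
    rw [← MonoidHom.mem_ker, Abelianization.ker_of]
    simpa using mul_mem hac hc
  · obtain ⟨b, rfl⟩ := QuotientGroup.mk_surjective y
    obtain ⟨a, rfl⟩ := hf b
    exact ⟨Abelianization.of a, Abelianization.map_of f a⟩

theorem FreeGroup.injective_of_surjective_of_ker_le_commutator {α β : Type*} [Finite α]
    {f : FreeGroup α →* FreeGroup β} (hf : Surjective f)
    (hker : f.ker ≤ commutator (FreeGroup α)) : Injective f := by
  let e : α ≃ β := Equiv.ofFreeAbelianGroupEquiv <| MulEquiv.toAdditive <|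
    MulEquiv.ofBijective _ (Abelianization.map_bijective_of_surjective_of_ker_le hf hker)
  let e' := FreeGroup.freeGroupCongr e.symm
  have hθ : Injective (e' ∘ f) := Group.ResiduallyFinite.injective_of_surjective
    (f := (e' : FreeGroup β →* FreeGroup α).comp f) (e'.surjective.comp hf)
  exact hθ.of_comp

theorem FreeGroup.ker_not_le_commutator_of_not_injective {α β : Type*} [Finite α]
    {φ : FreeGroup α →* FreeGroup β} (hφ : ¬ Injective φ) :
    ¬ φ.ker ≤ commutator (FreeGroup α) := fun hker => hφ <| by
  let e := IsFreeGroup.toFreeGroup φ.range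
  have hθ : Injective (e ∘ φ.rangeRestrict) := injective_of_surjective_of_ker_le_commutator
    (f := (e : φ.range →* FreeGroup (IsFreeGroup.Generators φ.range)).comp φ.rangeRestrict)
    (e.surjective.comp φ.rangeRestrict_surjective)
    (by rwa [MonoidHom.ker_mulEquiv_comp, MonoidHom.ker_rangeRestrict])
  exact MonoidHom.rangeRestrict_injective_iff.mp hθ.of_comp

theorem FreeGroup.exists_hom_int_ne_one_of_notMem_commutator {α : Type*} {w : FreeGroup α}
    (hw : w ∉ commutator (FreeGroup α)) :
    ∃ ψ : FreeGroup α →* Multiplicative ℤ,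
      (∀ s ∈ Set.range FreeGroup.of, (ψ s).toAdd.natAbs ≤ 1) ∧ ψ w ≠ 1 := by
  have hab : (Additive.ofMul (Abelianization.of w) : FreeAbelianGroup α) ≠ 0 := by
    rwa [Ne, ofMul_eq_zero, ← MonoidHom.mem_ker, Abelianization.ker_of]
  obtain ⟨i, hi⟩ := FreeAbelianGroup.nonempty_support_iff.mpr hab
  replace hi := (FreeAbelianGroup.mem_support_iff i _).mp hi
  refine ⟨(AddMonoidHom.toMultiplicativeRight (FreeAbelianGroup.coeff i)).comp Abelianization.of,
    ?_, fun h => hi (congrArg Multiplicative.toAdd h)⟩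
  rintro _ ⟨j, rfl⟩
  change (FreeAbelianGroup.coeff i (FreeAbelianGroup.of j)).natAbs ≤ 1
  simp only [FreeAbelianGroup.coeff, AddMonoidHom.comp_apply, FreeAbelianGroup.toFinsupp_of,
    Finsupp.applyAddHom_apply]
  classical
  rw [Finsupp.single_apply]
  split_ifs <;> simp

theorem not_isQuasiIsometricEmbedding_of_unbounded_of_bounded_image {X Y : Type*}
    {d₁ : X → X → ℝ} {d₂ : Y → Y → ℝ} {φ : X → Y} (A : Set X)
    (hA : ¬ ∃ B : ℝ, ∀ x ∈ A, ∀ y ∈ A, d₁ x y ≤ B)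
    (hφA : ∃ B : ℝ, ∀ x ∈ A, ∀ y ∈ A, d₂ (φ x) (φ y) ≤ B) :
    ¬ IsQuasiIsometricEmbedding d₁ d₂ φ := by
  rintro ⟨C, hC, D, -, hφ⟩
  obtain ⟨B, hB⟩ := hφA
  refine hA ⟨(B + D) * C, fun x hx y hy => ?_⟩
  have hxy : d₁ x y / C ≤ B + D := by
    linarith [(hφ x y).1, hB x hx y hy, one_div_mul_eq_div C (d₁ x y)]
  exact (div_le_iff₀ hC).mp hxy

lemma freeDist_eq_ciNorm (m : ℕ) (g h : FreeGroup (Fin m)) :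
    freeDist m g h = ciNorm (Set.range FreeGroup.of) (g * h⁻¹) := rfl

theorem not_quasiIsometricEmbedding_of_not_injective_general (m n : ℕ)
    (φ : FreeGroup (Fin m) →* FreeGroup (Fin n))
    (hφ : ¬ Function.Injective φ) :
    (¬ ∃ B : ℝ, ∀ x ∈ φ.ker, ∀ y ∈ φ.ker, freeDist m x y ≤ B) ∧
    (∃ B : ℝ, ∀ x ∈ φ.ker, ∀ y ∈ φ.ker, freeDist n (φ x) (φ y) ≤ B) ∧
    ¬ IsQuasiIsometricEmbedding (freeDist m) (freeDist n) φ := by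
  obtain ⟨w, hwφ, hw⟩ := SetLike.not_le_iff_exists.mp
    (FreeGroup.ker_not_le_commutator_of_not_injective hφ)
  obtain ⟨ψ, hψ, hψw⟩ := FreeGroup.exists_hom_int_ne_one_of_notMem_commutator hw
  have hunbounded : ¬ ∃ B : ℝ, ∀ x ∈ φ.ker, ∀ y ∈ φ.ker, freeDist m x y ≤ B := by
    rintro ⟨B, hB⟩
    obtain ⟨k, hk⟩ := exists_nat_gt B
    have hwk : (k : ℝ) ≤ freeDist m (w ^ k) 1 := by
      rw [freeDist_eq_ciNorm, inv_one, mul_one]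
      exact_mod_cast le_ciNorm_pow ψ hψ (by rw [FreeGroup.closure_range_of]; trivial) hψw k
    linarith [hB _ (pow_mem hwφ k) 1 (one_mem _)]
  have hbounded : ∃ B : ℝ, ∀ x ∈ φ.ker, ∀ y ∈ φ.ker, freeDist n (φ x) (φ y) ≤ B :=
    ⟨0, fun x hx y hy => by
      rw [freeDist_eq_ciNorm, MonoidHom.mem_ker.mp hx, MonoidHom.mem_ker.mp hy, mul_inv_cancel,
        ciNorm_one, Nat.cast_zero]⟩
  exact ⟨hunbounded, hbounded,
    not_isQuasiIsometricEmbedding_of_unbounded_of_bounded_image _ hunbounded hbounded⟩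

/-- A non-injective homomorphism `F_m → F_n` has unbounded kernel with bounded image,
and hence is not a quasi-isometric embedding for the bi-invariant word metrics. -/
theorem not_quasiIsometricEmbedding_of_not_injective (m n : ℕ)
    (hm : 1 ≤ m) (hn : 1 ≤ n)
    (φ : FreeGroup (Fin m) →* FreeGroup (Fin n))
    (hφ : ¬ Function.Injective φ) :
    (¬ ∃ B : ℝ, ∀ x ∈ φ.ker, ∀ y ∈ φ.ker, freeDist m x y ≤ B) ∧
    (∃ B : ℝ, ∀ x ∈ φ.ker, ∀ y ∈ φ.ker, freeDist n (φ x) (φ y) ≤ B) ∧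
    ¬ IsQuasiIsometricEmbedding (freeDist m) (freeDist n) φ :=
  not_quasiIsometricEmbedding_of_not_injective_general m n φ hφ
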